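/- arXiv:1709.04431 — 2 statements merged into one kernel-verified Lean document; each statement's English description precedes it below -/
import Mathlib

section
/- Let X be a finite pure n-dimensional simplicial complex whose 1-skeleton is connected, and such that the 1-skeletons of all links of X of dimension > 0 are connected. Then X is gallery connected: for every two vertices u, v ∈ X^{(0)} there is a sequence of n-dimensional simplices σ_0, …, σ_l ∈ X^{(n)} such that u ∈ σ_0, v ∈ σ_l, and σ_i ∩ σ_{i+1} ∈ X^{(n−1)} for every 0 ≤ i ≤ l−1. -/
open Finset

variable {V : Type} [Fintype V] [DecidableEq V]

/-- A finite abstract simplicial complex on the vertex type `V`. -/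
structure SComplex (V : Type) [Fintype V] [DecidableEq V] where
  faces : Finset (Finset V)
  empty_mem : ∅ ∈ faces
  down_closed : ∀ s ∈ faces, ∀ t, t ⊆ s → t ∈ faces

namespace SComplex

/-- `X` is pure `n`-dimensional: every face is contained in an `n`-dimensional face. -/
def Pure (X : SComplex V) (n : ℕ) : Prop :=
  (∀ s ∈ X.faces, s.card ≤ n + 1) ∧
    ∀ s ∈ X.faces, ∃ t ∈ X.faces, s ⊆ t ∧ t.card = n + 1

/-- `σ` is an ordered simplex with `j` vertices (an element of `Σ(j-1)`). -/
def IsOSimp (X : SComplex V) {j : ℕ} (σ : Fin j → V) : Prop :=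
  Function.Injective σ ∧ Finset.image σ Finset.univ ∈ X.faces

instance {j : ℕ} (X : SComplex V) (σ : Fin j → V) : Decidable (X.IsOSimp σ) := by
  unfold IsOSimp; infer_instance

/-- A balanced, strictly positive weight function on the simplices of `X`. -/
def IsBalanced (X : SComplex V) (n : ℕ) (m : Finset V → ℝ) : Prop :=
  (∀ s ∈ X.faces, 0 < m s) ∧
    ∀ s ∈ X.faces, s.card ≤ n →
      m s = ∑ t ∈ X.faces.filter fun t => s ⊆ t ∧ t.card = s.card + 1, m t

/-- The weight of an ordered tuple (zero off the ordered simplices). -/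
noncomputable def wt (X : SComplex V) (m : Finset V → ℝ) {j : ℕ} (σ : Fin j → V) : ℝ :=
  if X.IsOSimp σ then m (Finset.image σ Finset.univ) else 0

/-- `φ` is a `j`-vertex form, i.e. an element of `C^{j-1}(X,ℝ)`:
antisymmetric and supported on the ordered simplices. -/
def IsForm (X : SComplex V) (j : ℕ) (φ : (Fin j → V) → ℝ) : Prop :=
  (∀ (σ : Fin j → V) (π : Equiv.Perm (Fin j)),
      φ (σ ∘ π) = ((Equiv.Perm.sign π : ℤ) : ℝ) * φ σ) ∧
    ∀ σ : Fin j → V, ¬X.IsOSimp σ → φ σ = 0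

/-- The inner product on `j`-vertex forms (`C^{j-1}(X,ℝ)`). -/
noncomputable def innerF (X : SComplex V) (m : Finset V → ℝ) (j : ℕ)
    (φ ψ : (Fin j → V) → ℝ) : ℝ :=
  ∑ σ : Fin j → V, X.wt m σ / (Nat.factorial j : ℝ) * (φ σ * ψ σ)

/-- The sum of a quantity over all ordered simplices with `j` vertices. -/
noncomputable def sumOSimp (X : SComplex V) (j : ℕ) (F : (Fin j → V) → ℝ) : ℝ :=
  ∑ σ : Fin j → V, if X.IsOSimp σ then F σ else 0

/-- The simplicial differential `d`. -/
def dOp {j : ℕ} (φ : (Fin j → V) → ℝ) : (Fin (j + 1) → V) → ℝ :=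
  fun σ => ∑ i : Fin (j + 1), (-1 : ℝ) ^ (i : ℕ) * φ (σ ∘ i.succAbove)

/-- The codifferential `δ` (the adjoint of `d`). -/
noncomputable def deltaOp (X : SComplex V) (m : Finset V → ℝ) {j : ℕ}
    (φ : (Fin (j + 1) → V) → ℝ) : (Fin j → V) → ℝ :=
  fun τ => ∑ v : V, X.wt m (Fin.cons v τ) / X.wt m τ * φ (Fin.cons v τ)

/-- The upper Laplacian `Δ⁺` on `j`-vertex forms (`C^{j-1}`). -/
noncomputable def lapPlus (X : SComplex V) (m : Finset V → ℝ) (j : ℕ)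
    (φ : (Fin j → V) → ℝ) : (Fin j → V) → ℝ :=
  X.deltaOp m (dOp φ)

/-- The lower Laplacian `Δ⁻` on `(j+1)`-vertex forms (`C^j`). -/
noncomputable def lapMinus (X : SComplex V) (m : Finset V → ℝ) (j : ℕ)
    (φ : (Fin (j + 1) → V) → ℝ) : (Fin (j + 1) → V) → ℝ :=
  dOp (X.deltaOp m φ)

/-- The set of eigenvalues of `Δ⁺` on `j`-vertex forms. -/
def specLapPlus (X : SComplex V) (m : Finset V → ℝ) (j : ℕ) : Set ℝ :=
  {μ | ∃ φ : (Fin j → V) → ℝ, X.IsForm j φ ∧ φ ≠ 0 ∧ X.lapPlus m j φ = μ • φ}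

/-- The set of eigenvalues of `Δ⁻` on `(j+1)`-vertex forms (`C^j`). -/
def specLapMinus (X : SComplex V) (m : Finset V → ℝ) (j : ℕ) : Set ℝ :=
  {μ | ∃ φ : (Fin (j + 1) → V) → ℝ, X.IsForm (j + 1) φ ∧ φ ≠ 0 ∧ X.lapMinus m j φ = μ • φ}

/-- The link of a face `s`. -/
def link (X : SComplex V) (s : Finset V) : SComplex V where
  faces := insert ∅ (X.faces.filter fun t => Disjoint s t ∧ s ∪ t ∈ X.faces)
  empty_mem := Finset.mem_insert_self _ _
  down_closed := by
    intro a ha t hts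
    rcases Finset.mem_insert.mp ha with h | h
    · refine Finset.mem_insert.mpr (Or.inl ?_)
      subst h; exact Finset.subset_empty.mp hts
    · rw [Finset.mem_filter] at h
      refine Finset.mem_insert.mpr (Or.inr (Finset.mem_filter.mpr
        ⟨X.down_closed a h.1 t hts, Disjoint.mono_right hts h.2.1,
          X.down_closed _ h.2.2 _ (Finset.union_subset_union (Finset.Subset.refl s) hts)⟩))

/-- The induced (balanced) weight on the link of `s`. -/
def linkWt (m : Finset V → ℝ) (s : Finset V) : Finset V → ℝ := fun t => m (s ∪ t)

/-- The graph given by the 1-skeleton of `X`. -/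
def skeleton (X : SComplex V) : SimpleGraph V where
  Adj u v := u ≠ v ∧ ({u, v} : Finset V) ∈ X.faces
  symm := ⟨by
    intro u v h
    exact ⟨h.1.symm, by rw [Finset.pair_comm]; exact h.2⟩⟩
  loopless := ⟨fun u h => h.1 rfl⟩

/-- The 1-skeleton of `X` is connected (on the vertices of `X`). -/
def SkelConnected (X : SComplex V) : Prop :=
  ∀ u v : V, ({u} : Finset V) ∈ X.faces → ({v} : Finset V) ∈ X.faces →
    X.skeleton.Reachable u v

/-- The 1-skeleton of `X` and the 1-skeletons of all links of `X` of dimension `> 0`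
are connected. -/
def AllLinksConnected (X : SComplex V) (n : ℕ) : Prop :=
  X.SkelConnected ∧ ∀ s ∈ X.faces, s.card < n → (X.link s).SkelConnected

/-- The localization `φ_τ ∈ C⁰(X_τ)` of a `(k+1)`-vertex form `φ` at an ordered
`k`-vertex simplex `τ`. -/
def localize {k : ℕ} (φ : (Fin (k + 1) → V) → ℝ) (τ : Fin k → V) : (Fin 1 → V) → ℝ :=
  fun σ => φ (Fin.append τ σ)

/-- The restriction of a cochain to the subcomplex `Y` (truncating off `Y`). -/
def restrict (Y : SComplex V) {j : ℕ} (φ : (Fin j → V) → ℝ) : (Fin j → V) → ℝ :=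
  fun σ => if Y.IsOSimp σ then φ σ else 0

/-- `S` is an `(n+1)`-partition of `X`: the vertices of `X` are partitioned into the
sides `S i`, and every edge joins two distinct sides. -/
def IsPartition (X : SComplex V) (n : ℕ) (S : Fin (n + 1) → Finset V) : Prop :=
  (∀ i, ∀ v ∈ S i, ({v} : Finset V) ∈ X.faces) ∧
    (∀ v : V, ({v} : Finset V) ∈ X.faces → ∃! i, v ∈ S i) ∧
    ∀ u v : V, u ≠ v → ({u, v} : Finset V) ∈ X.faces → ∀ i, u ∈ S i → v ∉ S i

/-- The side differential `d_{(k,j)}` with respect to the side `S`. -/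
def dSide (S : Finset V) {j : ℕ} (φ : (Fin j → V) → ℝ) : (Fin (j + 1) → V) → ℝ :=
  fun σ => ∑ i : Fin (j + 1),
    if σ i ∈ S then (-1 : ℝ) ^ (i : ℕ) * φ (σ ∘ i.succAbove) else 0

/-- The adjoint `δ_{(k,j)}` of the side differential. -/
noncomputable def deltaSide (X : SComplex V) (m : Finset V → ℝ) (S : Finset V) {j : ℕ}
    (φ : (Fin (j + 1) → V) → ℝ) : (Fin j → V) → ℝ :=
  fun τ => ∑ v ∈ S, X.wt m (Fin.cons v τ) / X.wt m τ * φ (Fin.cons v τ)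

/-- The side lower Laplacian `Δ⁻_{(k,j)}` on `(j+1)`-vertex forms (`C^j`). -/
noncomputable def lapMinusSide (X : SComplex V) (m : Finset V → ℝ) (S : Finset V) (j : ℕ)
    (φ : (Fin (j + 1) → V) → ℝ) : (Fin (j + 1) → V) → ℝ :=
  dSide S (X.deltaSide m S φ)

end SComplex

open SComplex

/-
Induction on `n`. Two top simplices sharing a vertex `w` come from two top simplices of the link
of `w`, which is again pure with connected links; a gallery there lifts to `X` by putting `w` back
into every simplex. This needs `n ≥ 2`: vertex links of a graph need not be connected, but two
distinct edges through `w` are adjacent already. Finally, an edge path `v₀, v₁, …, vₖ` in the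
connected 1-skeleton gives top simplices `ρᵢ ⊇ {vᵢ, vᵢ₊₁}`, consecutive ones sharing a vertex.
-/

namespace SComplex

def IsSimplex (X : SComplex V) (n : ℕ) (σ : Finset V) : Prop :=
  σ ∈ X.faces ∧ σ.card = n + 1

def GalleryAdj (X : SComplex V) (n : ℕ) (σ τ : Finset V) : Prop :=
  X.IsSimplex n σ ∧ X.IsSimplex n τ ∧ (σ ∩ τ).card = n

theorem ext_faces {X Y : SComplex V} (h : X.faces = Y.faces) : X = Y := by
  cases X; cases Y; congr

theorem mem_link_iff {X : SComplex V} {s t : Finset V} (hs : s ∈ X.faces) :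
    t ∈ (X.link s).faces ↔ Disjoint s t ∧ s ∪ t ∈ X.faces := by
  simp only [link, mem_insert, mem_filter]
  constructor
  · rintro (rfl | ⟨-, h⟩)
    · simpa using hs
    · exact h
  · rintro ⟨hd, hu⟩
    exact Or.inr ⟨X.down_closed _ hu _ subset_union_right, hd, hu⟩

theorem mem_link_singleton_iff {X : SComplex V} {w : V} {t : Finset V}
    (hw : {w} ∈ X.faces) : t ∈ (X.link {w}).faces ↔ w ∉ t ∧ insert w t ∈ X.faces := by
  rw [mem_link_iff hw, disjoint_singleton_left, insert_eq]

theorem link_link {X : SComplex V} {w : V} {s : Finset V} (hw : {w} ∈ X.faces)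
    (hs : s ∈ (X.link {w}).faces) : (X.link {w}).link s = X.link (insert w s) := by
  obtain ⟨hws, hwsX⟩ := (mem_link_singleton_iff hw).1 hs
  refine ext_faces (Finset.ext fun t => ?_)
  rw [mem_link_iff hs, mem_link_singleton_iff hw, mem_link_iff hwsX, disjoint_insert_left,
    insert_union, mem_union]
  tauto

theorem isSimplex_erase_of_mem {X : SComplex V} {n : ℕ} {w : V} {σ : Finset V}
    (hσ : X.IsSimplex (n + 1) σ) (hwσ : w ∈ σ) : (X.link {w}).IsSimplex n (σ.erase w) := by
  have hw : {w} ∈ X.faces := X.down_closed _ hσ.1 _ (singleton_subset_iff.2 hwσ)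
  refine ⟨(mem_link_singleton_iff hw).2 ⟨notMem_erase w σ, ?_⟩, ?_⟩
  · rw [insert_erase hwσ]; exact hσ.1
  · rw [card_erase_of_mem hwσ, hσ.2]; rfl

theorem IsSimplex.insert_of_link {X : SComplex V} {n : ℕ} {w : V} {σ : Finset V}
    (hw : {w} ∈ X.faces) (hσ : (X.link {w}).IsSimplex n σ) :
    X.IsSimplex (n + 1) (insert w σ) := by
  obtain ⟨hwσ, hσX⟩ := (mem_link_singleton_iff hw).1 hσ.1
  exact ⟨hσX, by rw [card_insert_of_notMem hwσ, hσ.2]⟩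

theorem GalleryAdj.insert_of_link {X : SComplex V} {n : ℕ} {w : V} {σ τ : Finset V}
    (hw : {w} ∈ X.faces) (h : (X.link {w}).GalleryAdj n σ τ) :
    X.GalleryAdj (n + 1) (insert w σ) (insert w τ) := by
  obtain ⟨hσ, hτ, hστ⟩ := h
  have hwσ : w ∉ σ := ((mem_link_singleton_iff hw).1 hσ.1).1
  refine ⟨hσ.insert_of_link hw, hτ.insert_of_link hw, ?_⟩
  rw [← insert_inter_distrib, card_insert_of_notMem fun h => hwσ (mem_inter.1 h).1, hστ]

theorem Pure.link {X : SComplex V} {n : ℕ} {w : V} (hX : X.Pure (n + 1))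
    (hw : {w} ∈ X.faces) : (X.link {w}).Pure n := by
  constructor
  · intro t ht
    obtain ⟨hwt, htX⟩ := (mem_link_singleton_iff hw).1 ht
    have := hX.1 _ htX
    rw [card_insert_of_notMem hwt] at this
    omega
  · intro t ht
    obtain ⟨hwt, htX⟩ := (mem_link_singleton_iff hw).1 ht
    obtain ⟨T, hT, htT, hTc⟩ := hX.2 _ htX
    have hwT : w ∈ T := htT (mem_insert_self w t)
    obtain ⟨hTw, hTwc⟩ := isSimplex_erase_of_mem ⟨hT, hTc⟩ hwT
    exact ⟨T.erase w, hTw, subset_erase.2 ⟨(subset_insert w t).trans htT, hwt⟩, hTwc⟩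

theorem AllLinksConnected.link {X : SComplex V} {n : ℕ} {w : V} (hn : 0 < n)
    (hX : X.AllLinksConnected (n + 1)) (hw : {w} ∈ X.faces) :
    (X.link {w}).AllLinksConnected n := by
  refine ⟨hX.2 {w} hw (by rw [card_singleton]; omega), fun s hs hsn => ?_⟩
  obtain ⟨hws, hwsX⟩ := (mem_link_singleton_iff hw).1 hs
  rw [link_link hw hs]
  exact hX.2 _ hwsX (by rw [card_insert_of_notMem hws]; omega)

theorem skeleton_eq_bot_of_pure_zero {X : SComplex V} (hX : X.Pure 0) : X.skeleton = ⊥ := by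
  ext u v
  refine iff_of_false (fun ⟨huv, huvX⟩ => ?_) id
  have := hX.1 _ huvX
  rw [card_pair huv] at this
  omega

theorem galleryAdj_one_of_mem_of_mem {X : SComplex V} {σ τ : Finset V} {w : V}
    (hσ : X.IsSimplex 1 σ) (hτ : X.IsSimplex 1 τ) (hwσ : w ∈ σ) (hwτ : w ∈ τ) (hne : σ ≠ τ) :
    X.GalleryAdj 1 σ τ := by
  refine ⟨hσ, hτ, le_antisymm ?_ (card_pos.2 ⟨w, mem_inter.2 ⟨hwσ, hwτ⟩⟩)⟩
  by_contra! hlt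
  have hinter : σ ∩ τ = σ :=
    eq_of_subset_of_card_le inter_subset_left (by rw [hσ.2]; omega)
  exact hne (eq_of_subset_of_card_le (inter_eq_left.1 hinter) (by rw [hσ.2, hτ.2]))

theorem SkelConnected.reflTransGen_of_share_vertex {X : SComplex V} {n : ℕ}
    {r : Finset V → Finset V → Prop} (hskel : X.SkelConnected) (hX : X.Pure n)
    (hshare : ∀ σ τ w, X.IsSimplex n σ → X.IsSimplex n τ → w ∈ σ → w ∈ τ →
      Relation.ReflTransGen r σ τ)
    {σ τ : Finset V} (hσ : X.IsSimplex n σ) (hτ : X.IsSimplex n τ) :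
    Relation.ReflTransGen r σ τ := by
  obtain ⟨u, hu⟩ := card_pos.1 (by rw [hσ.2]; omega)
  obtain ⟨v, hv⟩ := card_pos.1 (by rw [hτ.2]; omega)
  obtain ⟨p⟩ := hskel u v (X.down_closed _ hσ.1 _ (singleton_subset_iff.2 hu))
    (X.down_closed _ hτ.1 _ (singleton_subset_iff.2 hv))
  induction p generalizing σ with
  | nil => exact hshare σ τ _ hσ hτ hu hv
  | @cons a b _ hab _ ih =>
    obtain ⟨ρ, hρ, habρ, hρc⟩ := hX.2 _ hab.2
    exact (hshare σ ρ a hσ ⟨hρ, hρc⟩ hu (habρ (by simp))).trans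
      (ih ⟨hρ, hρc⟩ (habρ (by simp)) hv)

theorem Pure.reflTransGen_galleryAdj {n : ℕ} {X : SComplex V} (hX : X.Pure n)
    (hconn : X.AllLinksConnected n) {σ τ : Finset V} (hσ : X.IsSimplex n σ)
    (hτ : X.IsSimplex n τ) : Relation.ReflTransGen (X.GalleryAdj n) σ τ := by
  induction n generalizing X σ τ with
  | zero =>
    obtain ⟨u, rfl⟩ := card_eq_one.1 hσ.2
    obtain ⟨v, rfl⟩ := card_eq_one.1 hτ.2
    have huv := hconn.1 u v hσ.1 hτ.1
    rw [skeleton_eq_bot_of_pure_zero hX, SimpleGraph.reachable_bot] at huv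
    rw [huv]
  | succ n ih =>
    refine hconn.1.reflTransGen_of_share_vertex hX (fun σ τ w hσ hτ hwσ hwτ => ?_) hσ hτ
    have hw : {w} ∈ X.faces := X.down_closed _ hσ.1 _ (singleton_subset_iff.2 hwσ)
    rcases n.eq_zero_or_pos with rfl | hn
    · by_cases hστ : σ = τ
      · rw [hστ]
      · exact .single (galleryAdj_one_of_mem_of_mem hσ hτ hwσ hwτ hστ)
    · have hlink := ih (hX.link hw) (hconn.link hn hw)
        (isSimplex_erase_of_mem hσ hwσ) (isSimplex_erase_of_mem hτ hwτ)
      rw [← insert_erase hwσ, ← insert_erase hwτ]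
      exact hlink.lift (insert w) fun _ _ h => h.insert_of_link hw

theorem exists_gallery_of_reflTransGen {X : SComplex V} {n : ℕ} {σ τ : Finset V}
    (hσ : X.IsSimplex n σ) (h : Relation.ReflTransGen (X.GalleryAdj n) σ τ) :
    ∃ (l : ℕ) (g : ℕ → Finset V), (∀ i ≤ l, X.IsSimplex n (g i)) ∧ g 0 = σ ∧ g l = τ ∧
      ∀ i < l, X.GalleryAdj n (g i) (g (i + 1)) := by
  induction h using Relation.ReflTransGen.head_induction_on with
  | refl => exact ⟨0, fun _ => τ, fun _ _ => hσ, rfl, rfl, nofun⟩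
  | @head ρ ρ' hρ _ ih =>
    obtain ⟨l, g, hg, hg0, hgl, hadj⟩ := ih hρ.2.1
    refine ⟨l + 1, fun | 0 => ρ | i + 1 => g i, ?_, rfl, hgl, ?_⟩
    · rintro (_ | i) hi
      exacts [hσ, hg i (by omega)]
    · rintro (_ | i) hi
      · show X.GalleryAdj n ρ (g 0)
        rwa [hg0]
      · exact hadj i (by omega)

end SComplex

/-- Proposition 3.11: a pure `n`-dimensional complex with connected
1-skeleton and connected links (in dimension `> 0`) is gallery connected. -/
theorem gallery_connected
    (X : SComplex V) (n : ℕ) (hpure : X.Pure n)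
    (hconn : X.AllLinksConnected n) :
    ∀ u v : V, ({u} : Finset V) ∈ X.faces → ({v} : Finset V) ∈ X.faces →
      ∃ (l : ℕ) (g : ℕ → Finset V),
        (∀ i ≤ l, g i ∈ X.faces ∧ (g i).card = n + 1) ∧
        u ∈ g 0 ∧ v ∈ g l ∧
        ∀ i < l, g i ∩ g (i + 1) ∈ X.faces ∧ (g i ∩ g (i + 1)).card = n := by
  intro u v hu hv
  obtain ⟨σ, hσ, huσ, hσc⟩ := hpure.2 _ hu
  obtain ⟨τ, hτ, hvτ, hτc⟩ := hpure.2 _ hv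
  obtain ⟨l, g, hg, rfl, rfl, hadj⟩ := exists_gallery_of_reflTransGen ⟨hσ, hσc⟩
    (hpure.reflTransGen_galleryAdj hconn ⟨hσ, hσc⟩ ⟨hτ, hτc⟩)
  exact ⟨l, g, hg, singleton_subset_iff.1 huσ, singleton_subset_iff.1 hvτ, fun i hi =>
    ⟨X.down_closed _ (hg i hi.le).1 _ inter_subset_left, (hadj i hi).2.2⟩⟩
end

section
/- Let X be a finite pure n-dimensional weighted simplicial complex. For every 0 ≤ k ≤ n−1 and every φ, ψ ∈ C^k(X,ℝ): k! ⟨dφ, dψ⟩ = Σ_{τ ∈ Σ(k−1)} ( ⟨d_τ φ_τ, d_τ ψ_τ⟩ − (k/(k+1)) ⟨φ_τ, ψ_τ⟩ ), where d_τ denotes the differential of the link X_τ and the inner products on the right-hand side are taken in X_τ. -/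
open Finset

variable {V : Type} [Fintype V] [DecidableEq V]

open SComplex

/-!
Expand `dφ(σ) dψ(σ)` as a double sum over the positions `a, b` deleted from `σ`. By
antisymmetry, each diagonal term `a = b` equals `diagSum` (a `(k+1)`-simplex `η` weighted by
the weights of its cofaces `vη`), and each of the `(k+2)(k+1)` off-diagonal terms equals
`-crossSum` (two `(k+1)`-simplices `uτ`, `vτ` through a common `τ`, weighted by `m(vuτ)`).
On the link side, `⟨d_τ φ_τ, d_τ ψ_τ⟩ = ∑ m(τuv)/2 (φ(τv) - φ(τu)) (ψ(τv) - ψ(τu))` sums over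
`τ` to `diagSum - crossSum`, and `∑_τ ⟨φ_τ, ψ_τ⟩ = ∑_η m(η) φ(η) ψ(η)`. For `k ≥ 1` balancing
identifies `diagSum` with this last sum, which reconciles the coefficients `1/(k+1)` and
`1 - k/(k+1)`.
-/

namespace Fin

variable {α : Type*}

theorem range_append {k j : ℕ} (τ : Fin k → α) (σ : Fin j → α) :
    Set.range (Fin.append τ σ) = Set.range τ ∪ Set.range σ := by
  ext v
  simp only [Set.mem_range, Set.mem_union]
  constructor
  · rintro ⟨i, rfl⟩
    induction i using Fin.addCases <;> simp
  · rintro (⟨i, rfl⟩ | ⟨i, rfl⟩)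
    exacts [⟨Fin.castAdd j i, by simp⟩, ⟨Fin.natAdd k i, by simp⟩]

theorem injective_iff_card_image_univ [DecidableEq α] {j : ℕ} (σ : Fin j → α) :
    Function.Injective σ ↔ (Finset.image σ Finset.univ).card = j := by
  rw [← Set.injOn_univ, ← Finset.coe_univ, ← Finset.card_image_iff, Finset.card_univ,
    Fintype.card_fin]

theorem image_univ_cons [DecidableEq α] {j : ℕ} (v : α) (η : Fin j → α) :
    Finset.image (Fin.cons v η : Fin (j + 1) → α) Finset.univ =
      insert v (Finset.image η Finset.univ) :=
  Finset.coe_injective (by simp [Fin.range_cons])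

theorem image_univ_append [DecidableEq α] {k j : ℕ} (τ : Fin k → α) (σ : Fin j → α) :
    Finset.image (Fin.append τ σ) Finset.univ =
      Finset.image τ Finset.univ ∪ Finset.image σ Finset.univ :=
  Finset.coe_injective (by simpa using range_append τ σ)

theorem odd_add_add_succAbove_add_predAbove {j : ℕ} (a : Fin (j + 2)) (b : Fin (j + 1)) :
    Odd ((a : ℕ) + (b : ℕ) + (a.succAbove b : ℕ) + (b.predAbove a : ℕ)) := by
  rw [Nat.odd_iff]
  simp only [Fin.succAbove, Fin.predAbove, Fin.lt_def, apply_dite Fin.val, apply_ite Fin.val,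
    Fin.val_castSucc, Fin.val_succ, Fin.val_pred, Fin.coe_castPred]
  split_ifs <;> omega

theorem insertNth_insertNth_comp_succAbove {j : ℕ} (a : Fin (j + 2)) (b : Fin (j + 1))
    (v u : α) (τ : Fin j → α) :
    a.insertNth v (b.insertNth u τ) ∘ (a.succAbove b).succAbove =
      (b.predAbove a).insertNth v τ := by
  ext q
  refine Fin.succAboveCases (b.predAbove a) ?_ (fun r => ?_) q
  · simp [Fin.succAbove_succAbove_predAbove]
  · simp [Fin.succAbove_succAbove_succAbove_predAbove]

variable [Fintype α] {M : Type*} [AddCommMonoid M]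

theorem sum_arrow_insertNth {j : ℕ} (i : Fin (j + 1)) (F : (Fin (j + 1) → α) → M) :
    ∑ σ, F σ = ∑ v, ∑ η, F (i.insertNth v η) := by
  rw [← (Fin.insertNthEquiv (fun _ => α) i).sum_comp, Fintype.sum_prod_type]
  rfl

theorem sum_arrow_snoc {j : ℕ} (F : (Fin (j + 1) → α) → M) :
    ∑ η, F η = ∑ τ, ∑ v, F (Fin.snoc τ v) := by
  simp_rw [sum_arrow_insertNth (Fin.last j), Fin.insertNth_last']
  exact Finset.sum_comm

theorem sum_arrow_one (F : (Fin 1 → α) → M) : ∑ σ, F σ = ∑ v, F ![v] :=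
  (Fintype.sum_equiv (Equiv.funUnique (Fin 1) α).symm _ _ fun v =>
    congrArg F (funext fun i => by fin_cases i; rfl)).symm

theorem sum_arrow_two (F : (Fin 2 → α) → M) : ∑ σ, F σ = ∑ u, ∑ v, F ![u, v] := by
  rw [← (finTwoArrowEquiv α).symm.sum_comp, Fintype.sum_prod_type]
  simp

end Fin

theorem Finset.sum_sum_half_mul_sub_mul_sub {α : Type*} [Fintype α] (w : α → α → ℝ)
    (hw : ∀ u v, w u v = w v u) (a b : α → ℝ) :
    ∑ u, ∑ v, w u v / 2 * ((a v - a u) * (b v - b u)) =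
      ∑ u, ∑ v, w u v * (a v * b v - a u * b v) := by
  have hswap : ∑ u, ∑ v, w u v * (a u * b u - a v * b u) =
      ∑ u, ∑ v, w u v * (a v * b v - a u * b v) := by
    rw [Finset.sum_comm]
    exact Finset.sum_congr rfl fun u _ => Finset.sum_congr rfl fun v _ => by rw [hw]
  calc ∑ u, ∑ v, w u v / 2 * ((a v - a u) * (b v - b u))
      = (∑ u, ∑ v, w u v * (a v * b v - a u * b v) +
          ∑ u, ∑ v, w u v * (a u * b u - a v * b u)) / 2 := by
        simp only [← Finset.sum_add_distrib, Finset.sum_div]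
        exact Finset.sum_congr rfl fun u _ => Finset.sum_congr rfl fun v _ => by ring
    _ = ∑ u, ∑ v, w u v * (a v * b v - a u * b v) := by rw [hswap]; ring

namespace SComplex

variable {X : SComplex V} {m : Finset V → ℝ}

variable (X m) in
lemma wt_eq_ite {j : ℕ} (σ : Fin j → V) :
    X.wt m σ = if (Finset.image σ Finset.univ).card = j ∧ Finset.image σ Finset.univ ∈ X.faces
      then m (Finset.image σ Finset.univ) else 0 := by
  simp only [wt, IsOSimp, Fin.injective_iff_card_image_univ]

lemma wt_congr {j : ℕ} {σ σ' : Fin j → V} (h : Set.range σ = Set.range σ') :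
    X.wt m σ = X.wt m σ' := by
  rw [wt_eq_ite, wt_eq_ite,
    show Finset.image σ Finset.univ = Finset.image σ' Finset.univ from
      Finset.coe_injective (by simpa using h)]

lemma IsOSimp.of_append {k j : ℕ} {τ : Fin k → V} {σ : Fin j → V}
    (h : X.IsOSimp (Fin.append τ σ)) : X.IsOSimp τ :=
  ⟨(Fin.append_injective_iff.1 h.1).1,
    X.down_closed _ h.2 _ (Fin.image_univ_append τ σ ▸ Finset.subset_union_left)⟩

lemma wt_append_of_not_isOSimp {k j : ℕ} {τ : Fin k → V} (hτ : ¬X.IsOSimp τ) (σ : Fin j → V) :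
    X.wt m (Fin.append τ σ) = 0 :=
  if_neg (mt IsOSimp.of_append hτ)

lemma IsForm.apply_insertNth {j : ℕ} {φ : (Fin (j + 1) → V) → ℝ} (hφ : X.IsForm (j + 1) φ)
    (i : Fin (j + 1)) (v : V) (η : Fin j → V) :
    φ (i.insertNth v η) = (-1) ^ (i : ℕ) * φ (Fin.cons v η) := by
  rw [← Fin.cons_comp_cycleRange, hφ.1, Fin.sign_cycleRange]
  simp

lemma IsForm.apply_snoc {j : ℕ} {φ : (Fin (j + 1) → V) → ℝ} (hφ : X.IsForm (j + 1) φ)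
    (η : Fin j → V) (v : V) :
    φ (Fin.snoc η v) = (-1) ^ j * φ (Fin.cons v η) := by
  rw [← Fin.insertNth_last', hφ.apply_insertNth, Fin.val_last]

variable (X) in
lemma faces_filter_card_succ_eq_image_insert (s : Finset V) :
    X.faces.filter (fun t => s ⊆ t ∧ t.card = s.card + 1) =
      (Finset.univ.filter fun v => v ∉ s ∧ insert v s ∈ X.faces).image (insert · s) := by
  ext t
  simp only [Finset.mem_filter, Finset.mem_image, Finset.mem_univ, true_and]
  constructor
  · rintro ⟨ht, hst, hc⟩
    obtain ⟨a, ha, rfl⟩ := Finset.exists_eq_insert_iff.2 ⟨hst, hc.symm⟩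
    exact ⟨a, ⟨ha, ht⟩, rfl⟩
  · rintro ⟨a, ⟨ha, hf⟩, rfl⟩
    obtain ⟨hst, hc⟩ := Finset.exists_eq_insert_iff.1 ⟨a, ha, rfl⟩
    exact ⟨hf, hst, hc.symm⟩

lemma sum_wt_cons_of_isBalanced {n j : ℕ} (hm : X.IsBalanced n m) (hj : j ≤ n)
    (η : Fin j → V) :
    ∑ v, X.wt m (Fin.cons v η) = X.wt m η := by
  by_cases hη : X.IsOSimp η
  · set s := Finset.image η Finset.univ
    have hs : s.card = j := (Fin.injective_iff_card_image_univ η).1 hη.1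
    have hcons : ∀ v, X.wt m (Fin.cons v η) =
        if v ∉ s ∧ insert v s ∈ X.faces then m (insert v s) else 0 := by
      intro v
      rw [wt_eq_ite, Fin.image_univ_cons]
      by_cases hv : v ∈ s
      · rw [Finset.card_insert_of_mem hv, hs, if_neg (by omega), if_neg (by simp [hv])]
      · rw [Finset.card_insert_of_notMem hv, hs]
        simp [hv, s]
    rw [Finset.sum_congr rfl fun v _ => hcons v, ← Finset.sum_filter, wt, if_pos hη,
      hm.2 s hη.2 (hs ▸ hj), faces_filter_card_succ_eq_image_insert,
      Finset.sum_image fun v hv w _ hvw => (Finset.insert_inj (Finset.mem_filter.1 hv).2.1).1 hvw]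
  · rw [show X.wt m η = 0 from if_neg hη]
    refine Finset.sum_eq_zero fun v _ => ?_
    rw [wt_congr (σ' := Fin.append η ![v])
      (by simp [Fin.range_append, Fin.range_cons, Set.union_comm])]
    exact wt_append_of_not_isOSimp hη _

lemma mem_link_faces {s t : Finset V} (hs : s ∈ X.faces) :
    t ∈ (X.link s).faces ↔ Disjoint s t ∧ s ∪ t ∈ X.faces := by
  simp only [link, Finset.mem_insert, Finset.mem_filter]
  constructor
  · rintro (rfl | ⟨-, h⟩)
    · simpa using hs
    · exact h
  · rintro ⟨hd, hu⟩
    exact Or.inr ⟨X.down_closed _ hu _ Finset.subset_union_right, hd, hu⟩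

lemma link_wt_eq_wt_append {k j : ℕ} {τ : Fin k → V} (hτ : X.IsOSimp τ) (σ : Fin j → V) :
    (X.link (Finset.image τ Finset.univ)).wt (linkWt m (Finset.image τ Finset.univ)) σ =
      X.wt m (Fin.append τ σ) := by
  rw [wt_eq_ite, wt_eq_ite, Fin.image_univ_append]
  set s := Finset.image τ Finset.univ
  set t := Finset.image σ Finset.univ
  have hsf : s ∈ X.faces := hτ.2
  have hs : s.card = k := (Fin.injective_iff_card_image_univ τ).1 hτ.1
  have ht : t.card ≤ j := Finset.card_image_le.trans (by simp)
  have hcard : t.card = j ∧ Disjoint s t ↔ (s ∪ t).card = k + j := by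
    have := Finset.card_union_add_card_inter s t
    rw [Finset.disjoint_iff_inter_eq_empty, ← Finset.card_eq_zero]
    omega
  simp only [mem_link_faces hsf, ← and_assoc, hcard]
  rfl

lemma link_innerF_eq {k j : ℕ} {τ : Fin k → V} (hτ : X.IsOSimp τ) (F G : (Fin j → V) → ℝ) :
    (X.link (Finset.image τ Finset.univ)).innerF (linkWt m (Finset.image τ Finset.univ)) j F G =
      ∑ σ, X.wt m (Fin.append τ σ) / (j.factorial : ℝ) * (F σ * G σ) := by
  simp only [innerF, link_wt_eq_wt_append hτ]

lemma dOp_localize_vec {α : Type} {k : ℕ} (φ : (Fin (k + 1) → α) → ℝ) (τ : Fin k → α)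
    (u v : α) :
    dOp (localize φ τ) ![u, v] = φ (Fin.snoc τ v) - φ (Fin.snoc τ u) := by
  simp [dOp, localize, Fin.sum_univ_two, Fin.append_right_eq_snoc]
  ring

variable (X m) in
noncomputable def diagSum {j : ℕ} (φ ψ : (Fin j → V) → ℝ) : ℝ :=
  ∑ η, ∑ v, X.wt m (Fin.cons v η) * (φ η * ψ η)

variable (X m) in
noncomputable def crossSum {j : ℕ} (φ ψ : (Fin (j + 1) → V) → ℝ) : ℝ :=
  ∑ τ : Fin j → V, ∑ u, ∑ v,
    X.wt m (Fin.cons v (Fin.cons u τ)) * (φ (Fin.cons u τ) * ψ (Fin.cons v τ))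

lemma diagSum_eq_of_isBalanced {n j : ℕ} (hm : X.IsBalanced n m) (hj : j ≤ n)
    (φ ψ : (Fin j → V) → ℝ) :
    X.diagSum m φ ψ = ∑ η, X.wt m η * (φ η * ψ η) :=
  Finset.sum_congr rfl fun η _ => by rw [← Finset.sum_mul, sum_wt_cons_of_isBalanced hm hj]

lemma sum_wt_mul_diag {j : ℕ} (φ ψ : (Fin (j + 1) → V) → ℝ) (a : Fin (j + 2)) :
    ∑ σ : Fin (j + 2) → V, X.wt m σ *
        ((-1) ^ (a : ℕ) * φ (σ ∘ a.succAbove) * ((-1) ^ (a : ℕ) * ψ (σ ∘ a.succAbove))) =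
      X.diagSum m φ ψ := by
  rw [Fin.sum_arrow_insertNth a, diagSum, Finset.sum_comm]
  refine Finset.sum_congr rfl fun η _ => Finset.sum_congr rfl fun v _ => ?_
  rw [Fin.insertNth_comp_succAbove,
    wt_congr (σ' := Fin.cons v η) (by simp [Fin.range_cons]; rfl)]
  have hsq : ((-1 : ℝ) ^ (a : ℕ)) * (-1) ^ (a : ℕ) = 1 := by rw [← mul_pow]; simp
  linear_combination (X.wt m (Fin.cons v η) * (φ η * ψ η)) * hsq

lemma sum_wt_mul_cross {j : ℕ} {φ ψ : (Fin (j + 1) → V) → ℝ} (hφ : X.IsForm (j + 1) φ)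
    (hψ : X.IsForm (j + 1) ψ) (a : Fin (j + 2)) (b : Fin (j + 1)) :
    ∑ σ : Fin (j + 2) → V, X.wt m σ * ((-1) ^ (a : ℕ) * φ (σ ∘ a.succAbove) *
        ((-1) ^ (a.succAbove b : ℕ) * ψ (σ ∘ (a.succAbove b).succAbove))) =
      -X.crossSum m φ ψ := by
  have hsign := (Fin.odd_add_add_succAbove_add_predAbove a b).neg_one_pow (α := ℝ)
  simp only [pow_add] at hsign
  have hterm : ∀ v u τ, X.wt m (a.insertNth v (b.insertNth u τ)) *
      ((-1) ^ (a : ℕ) * φ (a.insertNth v (b.insertNth u τ) ∘ a.succAbove) *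
        ((-1) ^ (a.succAbove b : ℕ) *
          ψ (a.insertNth v (b.insertNth u τ) ∘ (a.succAbove b).succAbove))) =
      -(X.wt m (Fin.cons v (Fin.cons u τ)) * (φ (Fin.cons u τ) * ψ (Fin.cons v τ))) := by
    intro v u τ
    rw [Fin.insertNth_comp_succAbove, Fin.insertNth_insertNth_comp_succAbove,
      hφ.apply_insertNth, hψ.apply_insertNth,
      wt_congr (σ' := Fin.cons v (Fin.cons u τ)) (by simp [Fin.range_cons]; rfl)]
    linear_combination
      (X.wt m (Fin.cons v (Fin.cons u τ)) * (φ (Fin.cons u τ) * ψ (Fin.cons v τ))) * hsign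
  rw [Fin.sum_arrow_insertNth a, Finset.sum_comm, Fin.sum_arrow_insertNth b, Finset.sum_comm]
  simp only [hterm, Finset.sum_neg_distrib, crossSum]

lemma sum_wt_mul_dOp_mul_dOp {j : ℕ} {φ ψ : (Fin (j + 1) → V) → ℝ} (hφ : X.IsForm (j + 1) φ)
    (hψ : X.IsForm (j + 1) ψ) :
    ∑ σ, X.wt m σ * (dOp φ σ * dOp ψ σ) =
      (j + 2) * (X.diagSum m φ ψ - (j + 1) * X.crossSum m φ ψ) := by
  have hrow : ∀ a : Fin (j + 2), ∑ b : Fin (j + 2), ∑ σ : Fin (j + 2) → V, X.wt m σ *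
      ((-1) ^ (a : ℕ) * φ (σ ∘ a.succAbove) * ((-1) ^ (b : ℕ) * ψ (σ ∘ b.succAbove))) =
      X.diagSum m φ ψ - (j + 1) * X.crossSum m φ ψ := by
    intro a
    rw [Fin.sum_univ_succAbove _ a, sum_wt_mul_diag,
      Finset.sum_congr rfl fun b _ => sum_wt_mul_cross hφ hψ a b, Finset.sum_const,
      Finset.card_univ, Fintype.card_fin, nsmul_eq_mul]
    push_cast
    ring
  calc ∑ σ, X.wt m σ * (dOp φ σ * dOp ψ σ)
      = ∑ a : Fin (j + 2), ∑ b : Fin (j + 2), ∑ σ : Fin (j + 2) → V, X.wt m σ *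
          ((-1) ^ (a : ℕ) * φ (σ ∘ a.succAbove) * ((-1) ^ (b : ℕ) * ψ (σ ∘ b.succAbove))) := by
        simp only [dOp]
        simp_rw [Finset.sum_mul_sum, Finset.mul_sum]
        exact Finset.sum_comm.trans (Finset.sum_congr rfl fun a _ => Finset.sum_comm)
    _ = _ := by
        rw [Finset.sum_congr rfl fun a _ => hrow a, Finset.sum_const, Finset.card_univ,
          Fintype.card_fin, nsmul_eq_mul]
        push_cast
        ring

lemma factorial_mul_innerF_dOp_dOp {k : ℕ} {φ ψ : (Fin (k + 1) → V) → ℝ}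
    (hφ : X.IsForm (k + 1) φ) (hψ : X.IsForm (k + 1) ψ) :
    (k.factorial : ℝ) * X.innerF m (k + 2) (dOp φ) (dOp ψ) =
      X.diagSum m φ ψ / (k + 1) - X.crossSum m φ ψ := by
  have hinner : X.innerF m (k + 2) (dOp φ) (dOp ψ) =
      (∑ σ, X.wt m σ * (dOp φ σ * dOp ψ σ)) / (k + 2).factorial := by
    rw [innerF, Finset.sum_div]
    exact Finset.sum_congr rfl fun σ _ => by ring
  rw [hinner, sum_wt_mul_dOp_mul_dOp hφ hψ, Nat.factorial_succ, Nat.factorial_succ]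
  push_cast
  field_simp
  ring

lemma sum_link_innerF_two {k : ℕ} {φ ψ : (Fin (k + 1) → V) → ℝ} (hφ : X.IsForm (k + 1) φ)
    (hψ : X.IsForm (k + 1) ψ) :
    ∑ τ : Fin k → V, ∑ σ : Fin 2 → V, X.wt m (Fin.append τ σ) / (Nat.factorial 2 : ℝ) *
        (dOp (localize φ τ) σ * dOp (localize ψ τ) σ) =
      X.diagSum m φ ψ - X.crossSum m φ ψ := by
  have hτ : ∀ τ : Fin k → V, ∑ σ : Fin 2 → V, X.wt m (Fin.append τ σ) / (Nat.factorial 2 : ℝ) *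
        (dOp (localize φ τ) σ * dOp (localize ψ τ) σ) =
      ∑ u, ∑ v, X.wt m (Fin.cons v (Fin.cons u τ)) *
        (φ (Fin.snoc τ v) * ψ (Fin.snoc τ v) - φ (Fin.snoc τ u) * ψ (Fin.snoc τ v)) := by
    intro τ
    have hwt : ∀ u v, X.wt m (Fin.append τ ![u, v]) = X.wt m (Fin.cons v (Fin.cons u τ)) :=
      fun u v => wt_congr (by simp [Fin.range_append, Fin.range_cons])
    rw [Fin.sum_arrow_two, ← Finset.sum_sum_half_mul_sub_mul_sub _
      (fun u v => wt_congr (by simp [Fin.range_cons, Set.insert_comm]))]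
    simp [hwt, dOp_localize_vec]
  simp only [hτ, mul_sub, Finset.sum_sub_distrib]
  congr 1
  · rw [diagSum, Fin.sum_arrow_snoc]
    refine Finset.sum_congr rfl fun τ _ => ?_
    rw [Finset.sum_comm]
    refine Finset.sum_congr rfl fun v _ => Finset.sum_congr rfl fun u _ => ?_
    rw [wt_congr (σ' := Fin.cons u (Fin.snoc τ v)) (by simp [Fin.range_cons, Set.insert_comm])]
  · refine Finset.sum_congr rfl fun τ _ => Finset.sum_congr rfl fun u _ =>
      Finset.sum_congr rfl fun v _ => ?_
    have hsq : ((-1 : ℝ) ^ k) * (-1) ^ k = 1 := by rw [← mul_pow]; simp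
    rw [hφ.apply_snoc, hψ.apply_snoc]
    linear_combination
      (X.wt m (Fin.cons v (Fin.cons u τ)) * (φ (Fin.cons u τ) * ψ (Fin.cons v τ))) * hsq

lemma sum_link_innerF_one {k : ℕ} (φ ψ : (Fin (k + 1) → V) → ℝ) :
    ∑ τ : Fin k → V, ∑ σ : Fin 1 → V, X.wt m (Fin.append τ σ) / (Nat.factorial 1 : ℝ) *
        (localize φ τ σ * localize ψ τ σ) =
      ∑ η, X.wt m η * (φ η * ψ η) := by
  rw [Fin.sum_arrow_snoc]
  refine Finset.sum_congr rfl fun τ _ => ?_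
  simp [Fin.sum_arrow_one, localize, Fin.append_right_eq_snoc]

lemma sumOSimp_link_innerF {k : ℕ} {φ ψ : (Fin (k + 1) → V) → ℝ} (hφ : X.IsForm (k + 1) φ)
    (hψ : X.IsForm (k + 1) ψ) (c : ℝ) :
    (X.sumOSimp k fun τ =>
        (X.link (Finset.image τ Finset.univ)).innerF
          (linkWt m (Finset.image τ Finset.univ)) 2 (dOp (localize φ τ)) (dOp (localize ψ τ)) -
        c * (X.link (Finset.image τ Finset.univ)).innerF
            (linkWt m (Finset.image τ Finset.univ)) 1 (localize φ τ) (localize ψ τ)) =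
      X.diagSum m φ ψ - X.crossSum m φ ψ - c * ∑ η, X.wt m η * (φ η * ψ η) := by
  rw [← sum_link_innerF_two hφ hψ, ← sum_link_innerF_one, Finset.mul_sum,
    ← Finset.sum_sub_distrib]
  refine Finset.sum_congr rfl fun τ _ => ?_
  dsimp only
  split_ifs with hτ
  · rw [link_innerF_eq hτ, link_innerF_eq hτ]
  · simp [wt_append_of_not_isOSimp hτ]

end SComplex

theorem localization_of_differential_general
    (X : SComplex V) (n : ℕ) (m : Finset V → ℝ)
    (hm : X.IsBalanced n m)
    (k : ℕ) (hk : k ≤ n - 1)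
    (φ ψ : (Fin (k + 1) → V) → ℝ) (hφ : X.IsForm (k + 1) φ) (hψ : X.IsForm (k + 1) ψ) :
    (Nat.factorial k : ℝ) * X.innerF m (k + 2) (dOp φ) (dOp ψ) =
      X.sumOSimp k fun τ =>
        (X.link (Finset.image τ Finset.univ)).innerF
          (linkWt m (Finset.image τ Finset.univ)) 2 (dOp (localize φ τ)) (dOp (localize ψ τ)) -
        (k : ℝ) / ((k : ℝ) + 1) *
          (X.link (Finset.image τ Finset.univ)).innerF
            (linkWt m (Finset.image τ Finset.univ)) 1 (localize φ τ) (localize ψ τ) := by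
  rw [factorial_mul_innerF_dOp_dOp hφ hψ, sumOSimp_link_innerF hφ hψ]
  have hbal : (k : ℝ) * X.diagSum m φ ψ = k * ∑ η, X.wt m η * (φ η * ψ η) := by
    rcases Nat.eq_zero_or_pos k with rfl | hk0
    · simp
    · rw [diagSum_eq_of_isBalanced hm (by omega)]
  generalize ∑ η, X.wt m η * (φ η * ψ η) = B at hbal ⊢
  field_simp
  linarith

/-- Lemma 3.4: localization of the differential:
`k!⟨dφ,dψ⟩ = ∑_{τ∈Σ(k-1)} (⟨d_τφ_τ,d_τψ_τ⟩ - (k/(k+1))⟨φ_τ,ψ_τ⟩)`. -/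
theorem localization_of_differential
    (X : SComplex V) (n : ℕ) (m : Finset V → ℝ)
    (hpure : X.Pure n) (hm : X.IsBalanced n m)
    (k : ℕ) (hk : k ≤ n - 1)
    (φ ψ : (Fin (k + 1) → V) → ℝ) (hφ : X.IsForm (k + 1) φ) (hψ : X.IsForm (k + 1) ψ) :
    (Nat.factorial k : ℝ) * X.innerF m (k + 2) (dOp φ) (dOp ψ) =
      X.sumOSimp k fun τ =>
        (X.link (Finset.image τ Finset.univ)).innerF
          (linkWt m (Finset.image τ Finset.univ)) 2 (dOp (localize φ τ)) (dOp (localize ψ τ)) -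
        (k : ℝ) / ((k : ℝ) + 1) *
          (X.link (Finset.image τ Finset.univ)).innerF
            (linkWt m (Finset.image τ Finset.univ)) 1 (localize φ τ) (localize ψ τ) :=
  localization_of_differential_general X n m hm k hk φ ψ hφ hψ
end
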